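/- arXiv:2402.04484 — 8 statements merged into one kernel-verified Lean document; each statement's English description precedes it below -/
import Mathlib

section
/- Let n, f₀ ≠ 0, f₁, f₂ be real constants and let f(s) = f₀ s^n + f₁ s + f₂ (defined for s > 0 when n is not a natural number). If u : ℝ × ℝ → ℝ is a smooth positive solution of the generalized quasilinear KdV equation u_t + u² u_{xxx} + 4 u u_x u_{xx} + u_x³ + f'(u) u_x = 0, then for every real ε the function v(t,x) := e^{-2ε} u( e^{-(3n-5)ε} t , e^{-(n-3)ε} x + f₁ (e^{-(3n-5)ε} − e^{-(n-3)ε}) t ) is also a smooth positive solution of the same equation. -/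
/-- Partial derivative with respect to the first (time) variable. -/
noncomputable def pdt (u : ℝ × ℝ → ℝ) (p : ℝ × ℝ) : ℝ :=
  deriv (fun s => u (s, p.2)) p.1

/-- Partial derivative with respect to the second (space) variable. -/
noncomputable def pdx (u : ℝ × ℝ → ℝ) (p : ℝ × ℝ) : ℝ :=
  deriv (fun s => u (p.1, s)) p.2

/-- Left-hand side of the generalized quasilinear KdV equation
`u_t + u² u_{xxx} + 4 u u_x u_{xx} + u_x³ + f'(u) u_x`. -/
noncomputable def kdvLHS (f : ℝ → ℝ) (u : ℝ × ℝ → ℝ) (p : ℝ × ℝ) : ℝ :=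
  pdt u p + (u p) ^ 2 * pdx (pdx (pdx u)) p + 4 * u p * pdx u p * pdx (pdx u) p
    + (pdx u p) ^ 3 + deriv f (u p) * pdx u p

private lemma slice_x (w : ℝ × ℝ → ℝ) (hw : Differentiable ℝ w) (p : ℝ × ℝ) :
    HasDerivAt (fun s => w (p.1, s)) (fderiv ℝ w p ((0:ℝ), (1:ℝ))) p.2 := by
  have h1 : HasDerivAt (fun s : ℝ => ((p.1 : ℝ), s)) (((0:ℝ), (1:ℝ)) : ℝ × ℝ) p.2 :=
    (hasDerivAt_const _ _).prodMk (hasDerivAt_id _)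
  have h2 := (hw (p.1, p.2)).hasFDerivAt.comp_hasDerivAt p.2 h1
  simpa [Function.comp_def] using h2

private lemma slice_t (w : ℝ × ℝ → ℝ) (hw : Differentiable ℝ w) (p : ℝ × ℝ) :
    HasDerivAt (fun s => w (s, p.2)) (fderiv ℝ w p ((1:ℝ), (0:ℝ))) p.1 := by
  have h1 : HasDerivAt (fun s : ℝ => (s, (p.2 : ℝ))) (((1:ℝ), (0:ℝ)) : ℝ × ℝ) p.1 :=
    (hasDerivAt_id _).prodMk (hasDerivAt_const _ _)
  have h2 := (hw (p.1, p.2)).hasFDerivAt.comp_hasDerivAt p.1 h1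
  simpa [Function.comp_def] using h2

private lemma pdx_eq_fderiv (w : ℝ × ℝ → ℝ) (hw : Differentiable ℝ w) :
    pdx w = fun p => fderiv ℝ w p ((0:ℝ), (1:ℝ)) :=
  funext fun p => (slice_x w hw p).deriv

private lemma pdt_eq_fderiv (w : ℝ × ℝ → ℝ) (hw : Differentiable ℝ w) :
    pdt w = fun p => fderiv ℝ w p ((1:ℝ), (0:ℝ)) :=
  funext fun p => (slice_t w hw p).deriv

private lemma contDiff_pdx (w : ℝ × ℝ → ℝ) (hw : ContDiff ℝ (⊤ : ℕ∞) w) : ContDiff ℝ (⊤ : ℕ∞) (pdx w) := by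
  rw [pdx_eq_fderiv w (hw.differentiable (by simp))]
  exact (hw.fderiv_right (by simp)).clm_apply contDiff_const

private lemma pdx_comp (w : ℝ × ℝ → ℝ) (hw : Differentiable ℝ w) (k a b c : ℝ) :
    pdx (fun q : ℝ × ℝ => k * w (a * q.1, b * q.2 + c * q.1)) =
      fun q : ℝ × ℝ => k * b * pdx w (a * q.1, b * q.2 + c * q.1) := by
  funext p
  have hin : HasDerivAt (fun s : ℝ => ((a * p.1 : ℝ), b * s + c * p.1))
      (((0:ℝ), (b:ℝ)) : ℝ × ℝ) p.2 := by
    apply (hasDerivAt_const _ _).prodMk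
    simpa using ((hasDerivAt_id p.2).const_mul b).add_const (c * p.1)
  have h2 := (hw (a * p.1, b * p.2 + c * p.1)).hasFDerivAt.comp_hasDerivAt p.2 hin
  have h3 := h2.const_mul k
  have h4 : pdx (fun q : ℝ × ℝ => k * w (a * q.1, b * q.2 + c * q.1)) p
      = k * (fderiv ℝ w (a * p.1, b * p.2 + c * p.1) ((0:ℝ), (b:ℝ))) := by
    apply HasDerivAt.deriv
    exact h3
  have h5 : (((0:ℝ), (b:ℝ)) : ℝ × ℝ) = b • (((0:ℝ), (1:ℝ)) : ℝ × ℝ) := by simp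
  rw [h4, h5, map_smul, pdx_eq_fderiv w hw]
  simp [smul_eq_mul]; ring

private lemma pdt_comp (w : ℝ × ℝ → ℝ) (hw : Differentiable ℝ w) (k a b c : ℝ) :
    pdt (fun q : ℝ × ℝ => k * w (a * q.1, b * q.2 + c * q.1)) =
      fun q : ℝ × ℝ => k * (a * pdt w (a * q.1, b * q.2 + c * q.1)
        + c * pdx w (a * q.1, b * q.2 + c * q.1)) := by
  funext p
  have hin : HasDerivAt (fun s : ℝ => ((a * s : ℝ), b * p.2 + c * s))
      (((a:ℝ), (c:ℝ)) : ℝ × ℝ) p.1 := by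
    apply HasDerivAt.prodMk
    · simpa using (hasDerivAt_id p.1).const_mul a
    · simpa using ((hasDerivAt_id p.1).const_mul c).const_add (b * p.2)
  have h2 := (hw (a * p.1, b * p.2 + c * p.1)).hasFDerivAt.comp_hasDerivAt p.1 hin
  have h3 := h2.const_mul k
  have h4 : pdt (fun q : ℝ × ℝ => k * w (a * q.1, b * q.2 + c * q.1)) p
      = k * (fderiv ℝ w (a * p.1, b * p.2 + c * p.1) ((a:ℝ), (c:ℝ))) := by
    apply HasDerivAt.deriv
    exact h3
  have h5 : (((a:ℝ), (c:ℝ)) : ℝ × ℝ)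
      = a • (((1:ℝ), (0:ℝ)) : ℝ × ℝ) + c • (((0:ℝ), (1:ℝ)) : ℝ × ℝ) := by simp
  rw [h4, h5, map_add, map_smul, map_smul, pdx_eq_fderiv w hw, pdt_eq_fderiv w hw]
  simp [smul_eq_mul]

/-- The scaling/Galilean symmetry generated by
`X₃ = (3n−5) t ∂_t + ((n−3)x + 2f₁(n−1)t) ∂_x − 2u ∂_u` maps smooth positive solutions
of the generalized quasilinear KdV equation with `f(u) = f₀ uⁿ + f₁ u + f₂` to
smooth positive solutions. -/
theorem scaling_symmetry_power_law (n f₀ f₁ f₂ : ℝ) (hf₀ : f₀ ≠ 0) (f : ℝ → ℝ)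
    (hf : ∀ s : ℝ, 0 < s → f s = f₀ * s ^ n + f₁ * s + f₂)
    (u : ℝ × ℝ → ℝ) (hu : ContDiff ℝ (⊤ : ℕ∞) u) (hupos : ∀ p : ℝ × ℝ, 0 < u p)
    (hsol : ∀ p : ℝ × ℝ, kdvLHS f u p = 0) (ε : ℝ)
    (v : ℝ × ℝ → ℝ)
    (hv : ∀ q : ℝ × ℝ, v q = Real.exp (-2 * ε) *
      u (Real.exp (-(3 * n - 5) * ε) * q.1,
         Real.exp (-(n - 3) * ε) * q.2
           + f₁ * (Real.exp (-(3 * n - 5) * ε) - Real.exp (-(n - 3) * ε)) * q.1)) :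
    ContDiff ℝ (⊤ : ℕ∞) v ∧ (∀ q : ℝ × ℝ, 0 < v q) ∧ (∀ p : ℝ × ℝ, kdvLHS f v p = 0) := by
  set a : ℝ := Real.exp (-(3 * n - 5) * ε) with ha
  set b : ℝ := Real.exp (-(n - 3) * ε) with hb
  set k : ℝ := Real.exp (-2 * ε) with hk
  have hapos : 0 < a := Real.exp_pos _
  have hbpos : 0 < b := Real.exp_pos _
  have hkpos : 0 < k := Real.exp_pos _
  set c : ℝ := f₁ * (a - b) with hc
  have hvdef : v = fun q : ℝ × ℝ => k * u (a * q.1, b * q.2 + c * q.1) := by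
    funext q; exact hv q
  -- derivative of f on positives
  have hderiv : ∀ s : ℝ, 0 < s → deriv f s = f₀ * (n * s ^ (n - 1)) + f₁ := by
    intro s hs
    have hev : f =ᶠ[nhds s] fun t => f₀ * t ^ n + f₁ * t + f₂ := by
      filter_upwards [Ioi_mem_nhds hs] with t ht using hf t ht
    rw [hev.deriv_eq]
    have h1 : HasDerivAt (fun t : ℝ => f₀ * t ^ n + f₁ * t + f₂)
        (f₀ * (n * s ^ (n - 1)) + f₁) s := by
      have h2 := (Real.hasDerivAt_rpow_const (x := s) (p := n) (Or.inl hs.ne')).const_mul f₀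
      have h3 := (hasDerivAt_id s).const_mul f₁
      simpa using (h2.add h3).add_const f₂
    exact h1.deriv
  -- smoothness
  have hL : ContDiff ℝ (⊤ : ℕ∞) (fun q : ℝ × ℝ => ((a * q.1 : ℝ), b * q.2 + c * q.1)) := by
    apply ContDiff.prodMk
    · exact contDiff_const.mul contDiff_fst
    · exact (contDiff_const.mul contDiff_snd).add (contDiff_const.mul contDiff_fst)
  have hvsmooth : ContDiff ℝ (⊤ : ℕ∞) v := by
    rw [hvdef]; exact contDiff_const.mul (hu.comp hL)
  have hvpos : ∀ q : ℝ × ℝ, 0 < v q := by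
    intro q; rw [hvdef]; exact mul_pos hkpos (hupos _)
  refine ⟨hvsmooth, hvpos, ?_⟩
  intro p
  have hud := hu.differentiable (by simp)
  have hu1 := contDiff_pdx u hu
  have hu2 := contDiff_pdx _ hu1
  -- derivative formulas for v
  have h1 : pdx v = fun q : ℝ × ℝ => (k * b) * pdx u (a * q.1, b * q.2 + c * q.1) := by
    rw [hvdef]; exact pdx_comp u hud k a b c
  have h2 : pdx (pdx v) = fun q : ℝ × ℝ =>
      (k * b * b) * pdx (pdx u) (a * q.1, b * q.2 + c * q.1) := by
    rw [h1, pdx_comp (pdx u) (hu1.differentiable (by simp)) (k * b) a b c]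
  have h3 : pdx (pdx (pdx v)) = fun q : ℝ × ℝ =>
      (k * b * b * b) * pdx (pdx (pdx u)) (a * q.1, b * q.2 + c * q.1) := by
    rw [h2, pdx_comp (pdx (pdx u)) (hu2.differentiable (by simp)) (k * b * b) a b c]
  have ht : pdt v = fun q : ℝ × ℝ => k * (a * pdt u (a * q.1, b * q.2 + c * q.1)
      + c * pdx u (a * q.1, b * q.2 + c * q.1)) := by
    rw [hvdef]; exact pdt_comp u hud k a b c
  set pt : ℝ × ℝ := (a * p.1, b * p.2 + c * p.1) with hpt
  set U : ℝ := u pt with hU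
  set T : ℝ := pdt u pt with hT
  set X : ℝ := pdx u pt with hX
  set X2 : ℝ := pdx (pdx u) pt with hX2
  set X3 : ℝ := pdx (pdx (pdx u)) pt with hX3
  have hUpos : 0 < U := hupos pt
  have hsolp : T + U ^ 2 * X3 + 4 * U * X * X2 + X ^ 3
      + (f₀ * (n * U ^ (n - 1)) + f₁) * X = 0 := by
    have := hsol pt
    rw [kdvLHS, hderiv U hUpos] at this
    convert this using 2
  have hvp : v p = k * U := by rw [hvdef]
  have hdfv : deriv f (v p) = f₀ * (n * (k ^ (n - 1) * U ^ (n - 1))) + f₁ := by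
    rw [hvp, hderiv (k * U) (mul_pos hkpos hUpos),
      Real.mul_rpow hkpos.le hUpos.le]
  -- key exponential identities
  set K : ℝ := Real.exp (-(3 * n - 3) * ε) with hK
  have hka : k * a = K := by rw [hk, ha, hK, ← Real.exp_add]; ring_nf
  have hP : k * k * k * (b * b * b) = K := by
    rw [hk, hb, hK, ← Real.exp_add, ← Real.exp_add, ← Real.exp_add, ← Real.exp_add,
      ← Real.exp_add]
    ring_nf
  have hkn : k ^ (n - 1) * (k * b) = K := by
    have h6 : k ^ (n - 1) * k = k ^ n := by
      have h := (Real.rpow_add hkpos (n - 1) 1).symm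
      rw [Real.rpow_one] at h
      rw [h]
      norm_num
    have h7 : k ^ n = Real.exp (-2 * ε * n) := by
      rw [hk, ← Real.exp_mul]
    rw [← mul_assoc, h6, h7, hb, hK, ← Real.exp_add]
    ring_nf
  -- final computation
  rw [kdvLHS, ht, h3, h2, h1, hdfv, hvp]
  beta_reduce
  rw [← hpt, ← hT, ← hX, ← hX2, ← hX3]
  linear_combination K * hsolp + T * hka + f₁ * X * hka + k * X * hc
    + (U ^ 2 * X3 + 4 * U * X * X2 + X ^ 3) * hP + f₀ * n * U ^ (n - 1) * X * hkn
end

section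
/- Let f₀ ≠ 0, f₁, f₂ be real constants and let f(s) = f₀ s ln s + f₁ s + f₂ for s > 0. If u : ℝ × ℝ → ℝ is a smooth positive solution of the generalized quasilinear KdV equation u_t + u² u_{xxx} + 4 u u_x u_{xx} + u_x³ + f'(u) u_x = 0 (where f'(s) = f₀ ln s + f₀ + f₁), then for every real ε the function v(t,x) := e^{ε} u( e^{-ε} t , e^{-ε} x − f₀ ε e^{-ε} t ) is also a smooth positive solution of the same equation. -/
open scoped ContDiff


/-- The symmetry generated by `X₅ = t ∂_t + (x + f₀ t) ∂_x + u ∂_u` maps smooth positive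
solutions of the generalized quasilinear KdV equation with `f(u) = f₀ u ln u + f₁ u + f₂`
(so that `f'(u) = f₀ ln u + f₀ + f₁`) to smooth positive solutions. -/
theorem symmetry_u_log_u (f₀ f₁ f₂ : ℝ) (hf₀ : f₀ ≠ 0) (f : ℝ → ℝ)
    (hf : ∀ s : ℝ, 0 < s → f s = f₀ * s * Real.log s + f₁ * s + f₂)
    (u : ℝ × ℝ → ℝ) (hu : ContDiff ℝ (⊤ : ℕ∞) u) (hupos : ∀ p : ℝ × ℝ, 0 < u p)
    (hsol : ∀ p : ℝ × ℝ, pdt u p + (u p) ^ 2 * pdx (pdx (pdx u)) p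
      + 4 * u p * pdx u p * pdx (pdx u) p + (pdx u p) ^ 3
      + (f₀ * Real.log (u p) + f₀ + f₁) * pdx u p = 0)
    (ε : ℝ) (v : ℝ × ℝ → ℝ)
    (hv : ∀ q : ℝ × ℝ, v q = Real.exp ε *
      u (Real.exp (-ε) * q.1, Real.exp (-ε) * q.2 - f₀ * ε * Real.exp (-ε) * q.1)) :
    ContDiff ℝ (⊤ : ℕ∞) v ∧ (∀ q : ℝ × ℝ, 0 < v q) ∧
      (∀ p : ℝ × ℝ, pdt v p + (v p) ^ 2 * pdx (pdx (pdx v)) p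
        + 4 * v p * pdx v p * pdx (pdx v) p + (pdx v p) ^ 3
        + (f₀ * Real.log (v p) + f₀ + f₁) * pdx v p = 0) := by
  have hveq : v = fun q : ℝ × ℝ => Real.exp ε *
      u (Real.exp (-ε) * q.1, Real.exp (-ε) * q.2 - f₀ * ε * Real.exp (-ε) * q.1) := funext hv
  subst hveq
  set k := Real.exp (-ε) with hk
  have hEk : Real.exp ε * k = 1 := by
    rw [hk, ← Real.exp_add]; simp
  have h1i : (∞ : WithTop ℕ∞) ≠ 0 := by simp
  have hui : ContDiff ℝ ∞ u := hu.of_le (by simp)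
  have hudiff : Differentiable ℝ u := hui.differentiable h1i
  have hg : ∀ a : ℝ, ContDiff ℝ ∞ (fun s => u (a, s)) := fun a =>
    hui.comp (contDiff_const.prodMk contDiff_id)
  have hg1 : ∀ a : ℝ, ContDiff ℝ ∞ (deriv (fun s => u (a, s))) := fun a =>
    (contDiff_infty_iff_deriv.mp (hg a)).2
  have hg2 : ∀ a : ℝ, ContDiff ℝ ∞ (deriv (deriv (fun s => u (a, s)))) := fun a =>
    (contDiff_infty_iff_deriv.mp (hg1 a)).2
  have chain : ∀ (h : ℝ → ℝ), Differentiable ℝ h → ∀ (C M b : ℝ),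
      deriv (fun s => C * h (k * s - M)) b = C * (deriv h (k * b - M) * k) := by
    intro h hd C M b
    have h1 : HasDerivAt (fun s : ℝ => k * s - M) k b := by
      simpa using ((hasDerivAt_id b).const_mul k).sub_const M
    have h2 : HasDerivAt (fun s => h (k * s - M)) (deriv h (k * b - M) * k) b :=
      (hd (k * b - M)).hasDerivAt.comp b h1
    exact (h2.const_mul C).deriv
  set W : ℝ × ℝ → ℝ := fun q => Real.exp ε * u (k * q.1, k * q.2 - f₀ * ε * k * q.1) with hW
  have P1 : ∀ a b : ℝ, pdx W (a, b) =
      Real.exp ε * (deriv (fun r => u (k * a, r)) (k * b - f₀ * ε * k * a) * k) := by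
    intro a b
    exact chain (fun r => u (k * a, r)) ((hg (k * a)).differentiable h1i)
      (Real.exp ε) (f₀ * ε * k * a) b
  have P2 : ∀ a b : ℝ, pdx (pdx W) (a, b) =
      (Real.exp ε * k) * (deriv (deriv (fun r => u (k * a, r))) (k * b - f₀ * ε * k * a) * k) := by
    intro a b
    have he : (fun s => pdx W (a, s)) =
        fun s => (Real.exp ε * k) * deriv (fun r => u (k * a, r)) (k * s - f₀ * ε * k * a) := by
      funext s; rw [P1 a s]; ring
    show deriv (fun s => pdx W (a, s)) b = _
    rw [he]
    exact chain _ ((hg1 (k * a)).differentiable h1i) (Real.exp ε * k) (f₀ * ε * k * a) b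
  have P3 : ∀ a b : ℝ, pdx (pdx (pdx W)) (a, b) =
      (Real.exp ε * k * k) *
        (deriv (deriv (deriv (fun r => u (k * a, r)))) (k * b - f₀ * ε * k * a) * k) := by
    intro a b
    have he : (fun s => pdx (pdx W) (a, s)) =
        fun s => (Real.exp ε * k * k) *
          deriv (deriv (fun r => u (k * a, r))) (k * s - f₀ * ε * k * a) := by
      funext s; rw [P2 a s]; ring
    show deriv (fun s => pdx (pdx W) (a, s)) b = _
    rw [he]
    exact chain _ ((hg2 (k * a)).differentiable h1i) (Real.exp ε * k * k) (f₀ * ε * k * a) b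
  have hfd : ∀ pt : ℝ × ℝ, ∀ d1 d2 : ℝ,
      fderiv ℝ u pt (d1, d2) = d1 * pdt u pt + d2 * pdx u pt := by
    intro pt d1 d2
    have h1 : HasDerivAt (fun s => u (s, pt.2)) (fderiv ℝ u pt (1, 0)) pt.1 := by
      have := (hudiff pt).hasFDerivAt.comp_hasDerivAt pt.1
        ((hasDerivAt_id pt.1).prodMk (hasDerivAt_const pt.1 pt.2))
      simpa [Function.comp_def] using this
    have h2 : HasDerivAt (fun s => u (pt.1, s)) (fderiv ℝ u pt (0, 1)) pt.2 := by
      have := (hudiff pt).hasFDerivAt.comp_hasDerivAt pt.2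
        ((hasDerivAt_const pt.2 pt.1).prodMk (hasDerivAt_id pt.2))
      simpa [Function.comp_def] using this
    have e1 : pdt u pt = fderiv ℝ u pt (1, 0) := h1.deriv
    have e2 : pdx u pt = fderiv ℝ u pt (0, 1) := h2.deriv
    have hsplit : (d1, d2) = d1 • ((1:ℝ), (0:ℝ)) + d2 • ((0:ℝ), (1:ℝ)) := by
      simp [Prod.ext_iff]
    rw [hsplit, map_add, map_smul, map_smul, ← e1, ← e2]
    simp [smul_eq_mul]
  have P4 : ∀ a b : ℝ, pdt W (a, b) =
      Real.exp ε * (k * pdt u (k * a, k * b - f₀ * ε * k * a)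
        + -(f₀ * ε * k) * pdx u (k * a, k * b - f₀ * ε * k * a)) := by
    intro a b
    have h1 : HasDerivAt (fun s : ℝ => k * s) k a := by
      simpa using (hasDerivAt_id a).const_mul k
    have h2 : HasDerivAt (fun s : ℝ => k * b - f₀ * ε * k * s) (-(f₀ * ε * k)) a := by
      simpa using ((hasDerivAt_id a).const_mul (f₀ * ε * k)).const_sub (k * b)
    have hcomp : HasDerivAt (fun s => u (k * s, k * b - f₀ * ε * k * s))
        (fderiv ℝ u (k * a, k * b - f₀ * ε * k * a) (k, -(f₀ * ε * k))) a :=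
      (hudiff (k * a, k * b - f₀ * ε * k * a)).hasFDerivAt.comp_hasDerivAt a (h1.prodMk h2)
    have hval := (hcomp.const_mul (Real.exp ε)).deriv
    rw [hfd] at hval
    exact hval
  have hφ : ContDiff ℝ (⊤ : ℕ∞) (fun q : ℝ × ℝ => (k * q.1, k * q.2 - f₀ * ε * k * q.1)) :=
    (contDiff_const.mul contDiff_fst).prodMk
      ((contDiff_const.mul contDiff_snd).sub (contDiff_const.mul contDiff_fst))
  refine ⟨contDiff_const.mul (hu.comp hφ), fun q => mul_pos (Real.exp_pos ε) (hupos _), ?_⟩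
  rintro ⟨a, b⟩
  have key := hsol (k * a, k * b - f₀ * ε * k * a)
  have hWab : W (a, b) = Real.exp ε * u (k * a, k * b - f₀ * ε * k * a) := rfl
  rw [P1 a b, P2 a b, P3 a b, P4 a b, hWab,
    Real.log_mul (Real.exp_ne_zero ε) (hupos _).ne', Real.log_exp]
  simp only [pdx] at key ⊢
  linear_combination (Real.exp ε * k) * key +
    (Real.exp ε * k) * (Real.exp ε * k + 1) *
      ((u (k * a, k * b - f₀ * ε * k * a)) ^ 2 *
          deriv (deriv (deriv (fun r => u (k * a, r)))) (k * b - f₀ * ε * k * a)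
        + 4 * u (k * a, k * b - f₀ * ε * k * a) *
            deriv (fun r => u (k * a, r)) (k * b - f₀ * ε * k * a) *
            deriv (deriv (fun r => u (k * a, r))) (k * b - f₀ * ε * k * a)
        + (deriv (fun r => u (k * a, r)) (k * b - f₀ * ε * k * a)) ^ 3) * hEk
end

section
/- Let f : ℝ → ℝ be smooth and let g : ℝ → ℝ be a smooth function with g'(s) = s f'(s) for all s. Then for EVERY smooth function u : ℝ × ℝ → ℝ (not necessarily a solution), the pointwise identity D_t( ½ u² ) + D_x( u³ u_{xx} + ½ u² u_x² + g(u) ) = u · ( u_t + u² u_{xxx} + 4 u u_x u_{xx} + u_x³ + f'(u) u_x ) holds, where D_t and D_x are total derivatives (partial derivatives of the composite expressions with respect to t and x). In particular, on any solution of the generalized quasilinear KdV equation, T₂ = ½ u² and X₂ = u³ u_{xx} + ½ u² u_x² + g(u) satisfy the conservation law D_t T₂ + D_x X₂ = 0. -/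
/-- Momentum density `T₂ = ½ u²`. -/
noncomputable def T2 (u : ℝ × ℝ → ℝ) (p : ℝ × ℝ) : ℝ := (1 / 2) * (u p) ^ 2

/-- Momentum flux `X₂ = u³ u_{xx} + ½ u² u_x² + g(u)` where `g' (s) = s f'(s)`. -/
noncomputable def X2 (g : ℝ → ℝ) (u : ℝ × ℝ → ℝ) (p : ℝ × ℝ) : ℝ :=
  (u p) ^ 3 * pdx (pdx u) p + (1 / 2) * (u p) ^ 2 * (pdx u p) ^ 2 + g (u p)

theorem main_identity (f g : ℝ → ℝ) (hf : ContDiff ℝ (⊤ : ℕ∞) f)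
    (hg : ContDiff ℝ (⊤ : ℕ∞) g) (hg' : ∀ s : ℝ, deriv g s = s * deriv f s)
    (u : ℝ × ℝ → ℝ) (hu : ContDiff ℝ (⊤ : ℕ∞) u) (p : ℝ × ℝ) :
    pdt (T2 u) p + pdx (X2 g u) p = u p * kdvLHS f u p := by
  obtain ⟨t, x⟩ := p
  -- time direction
  set w : ℝ → ℝ := fun s => u (s, x) with hw_def
  have hws : ContDiff ℝ (⊤ : ℕ∞) w := hu.comp (contDiff_id.prodMk contDiff_const)
  have hw : HasDerivAt w (deriv w t) t := (hws.differentiable (by simp) t).hasDerivAt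
  -- space direction
  set v : ℝ → ℝ := fun s => u (t, s) with hv_def
  have hvs : ContDiff ℝ (⊤ : ℕ∞) v := hu.comp (contDiff_const.prodMk contDiff_id)
  have hv's := (contDiff_infty_iff_deriv.mp (hvs.of_le (by simp))).2
  have hv''s := (contDiff_infty_iff_deriv.mp hv's).2
  have hv : HasDerivAt v (deriv v x) x := (hvs.differentiable (by simp) x).hasDerivAt
  have hv' : HasDerivAt (deriv v) (deriv (deriv v) x) x :=
    (hv's.differentiable (by simp) x).hasDerivAt
  have hv'' : HasDerivAt (deriv (deriv v)) (deriv (deriv (deriv v)) x) x :=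
    (hv''s.differentiable (by simp) x).hasDerivAt
  have hgv : HasDerivAt (fun s => g (v s)) (deriv g (v x) * deriv v x) x :=
    ((hg.differentiable (by simp) (v x)).hasDerivAt).comp x hv
  -- pdx facts
  have e1 : ∀ s, pdx u (t, s) = deriv v s := fun s => rfl
  have e2 : ∀ s, pdx (pdx u) (t, s) = deriv (deriv v) s := by
    intro s
    show deriv (fun s' => pdx u (t, s')) s = _
    congr 1
  have e3 : pdx (pdx (pdx u)) (t, x) = deriv (deriv (deriv v)) x := by
    show deriv (fun s' => pdx (pdx u) (t, s')) x = _
    congr 1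
  -- pdt of T2
  have hT : pdt (T2 u) (t, x) = u (t, x) * pdt u (t, x) := by
    have h : HasDerivAt (fun s => (1/2 : ℝ) * (w s) ^ 2)
        ((1/2) * (2 * w t ^ 1 * deriv w t)) t := (hw.pow 2).const_mul (1/2)
    have : pdt (T2 u) (t, x) = (1/2) * (2 * w t ^ 1 * deriv w t) := h.deriv
    rw [this]
    show _ = w t * deriv w t
    ring
  -- pdx of X2
  have hX : pdx (X2 g u) (t, x)
      = 3 * v x ^ 2 * deriv v x * deriv (deriv v) x
        + v x ^ 3 * deriv (deriv (deriv v)) x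
        + (v x * deriv v x * (deriv v x)^2
            + (1/2) * v x ^ 2 * (2 * deriv v x * deriv (deriv v) x))
        + v x * deriv f (v x) * deriv v x := by
    have h1 : HasDerivAt (fun s => (v s) ^ 3 * deriv (deriv v) s)
        (3 * v x ^ 2 * deriv v x * deriv (deriv v) x
          + v x ^ 3 * deriv (deriv (deriv v)) x) x := by
      refine HasDerivAt.congr_deriv ((hv.pow 3).mul hv'') ?_
      simp only [Pi.pow_apply]; push_cast; ring
    have h2 : HasDerivAt (fun s => (1/2 : ℝ) * (v s) ^ 2 * (deriv v s) ^ 2)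
        (v x * deriv v x * (deriv v x)^2
          + (1/2) * v x ^ 2 * (2 * deriv v x * deriv (deriv v) x)) x := by
      have := ((hv.pow 2).const_mul (1/2 : ℝ)).mul (hv'.pow 2)
      refine HasDerivAt.congr_deriv this ?_
      simp only [Pi.pow_apply]; push_cast; ring
    have h3 : HasDerivAt (fun s => g (v s)) (v x * deriv f (v x) * deriv v x) x := by
      have := hgv
      rwa [hg'] at this
    have htot := (h1.add h2).add h3
    have heq : (fun s => X2 g u (t, s))
        = fun s => (v s) ^ 3 * deriv (deriv v) s
            + (1/2 : ℝ) * (v s) ^ 2 * (deriv v s) ^ 2 + g (v s) := by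
      funext s
      simp only [X2, e1 s, e2 s]
      rfl
    show deriv (fun s => X2 g u (t, s)) x = _
    rw [heq]
    exact htot.deriv
  rw [hT, hX]
  simp only [kdvLHS, e1 x, e2 x, e3]
  have huv : u (t, x) = v x := rfl
  rw [huv]
  ring

/-- The multiplier identity `D_t T₂ + D_x X₂ = u · (kdv LHS)` holds for every smooth
function `u`; in particular, on solutions the conservation law `D_t T₂ + D_x X₂ = 0`
holds. -/
theorem momentum_conservation_law (f g : ℝ → ℝ) (hf : ContDiff ℝ (⊤ : ℕ∞) f)
    (hg : ContDiff ℝ (⊤ : ℕ∞) g) (hg' : ∀ s : ℝ, deriv g s = s * deriv f s)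
    (u : ℝ × ℝ → ℝ) (hu : ContDiff ℝ (⊤ : ℕ∞) u) :
    (∀ p : ℝ × ℝ, pdt (T2 u) p + pdx (X2 g u) p = u p * kdvLHS f u p) ∧
      ((∀ p : ℝ × ℝ, kdvLHS f u p = 0) →
        ∀ p : ℝ × ℝ, pdt (T2 u) p + pdx (X2 g u) p = 0) := by
  refine ⟨main_identity f g hf hg hg' u hu, fun h p => ?_⟩
  rw [main_identity f g hf hg hg' u hu p, h p, mul_zero]
end

section
/- Let μ ≠ 0, λ, k, C₀, C₁, C₂, C₃, C₄ be real constants, and let f(s) = −3 C₄ μ² s⁵ − (5/2) C₃ μ² s⁴ − 2 C₂ μ² s³ − (3/2) C₁ μ² s² − C₀ μ² s + (λ/μ) s − k/μ. If w : ℝ → ℝ is a smooth nowhere-vanishing function satisfying μ³ w² w'' − λ w + μ³ w (w')² + μ f(w) + k = 0 on ℝ, then there exists a constant c ∈ ℝ such that (w'(z))² = C₄ w(z)⁴ + C₃ w(z)³ + C₂ w(z)² + C₁ w(z) + C₀ + 2c/(μ³ w(z)²) for all z ∈ ℝ. In particular, when c = 0, w satisfies the Jacobi elliptic equation (w')² =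 C₄ w⁴ + C₃ w³ + C₂ w² + C₁ w + C₀. -/
/-- For the special choice of `f` below, a nowhere-vanishing solution of the
second-order travelling wave ODE satisfies the quadrature
`(w')² = C₄ w⁴ + C₃ w³ + C₂ w² + C₁ w + C₀ + 2c/(μ³ w²)`; when `c = 0` this is the
Jacobi elliptic equation. -/
theorem travelling_wave_jacobi_quadrature (μ lam k C₀ C₁ C₂ C₃ C₄ : ℝ) (hμ : μ ≠ 0)
    (f : ℝ → ℝ)
    (hf : ∀ s : ℝ, f s = -3 * C₄ * μ ^ 2 * s ^ 5 - (5 / 2) * C₃ * μ ^ 2 * s ^ 4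
      - 2 * C₂ * μ ^ 2 * s ^ 3 - (3 / 2) * C₁ * μ ^ 2 * s ^ 2 - C₀ * μ ^ 2 * s
      + (lam / μ) * s - k / μ)
    (w : ℝ → ℝ) (hw : ContDiff ℝ (⊤ : ℕ∞) w) (hw0 : ∀ z : ℝ, w z ≠ 0)
    (hode : ∀ z : ℝ, μ ^ 3 * (w z) ^ 2 * deriv (deriv w) z - lam * w z
      + μ ^ 3 * w z * (deriv w z) ^ 2 + μ * f (w z) + k = 0) :
    ∃ c : ℝ, ∀ z : ℝ, (deriv w z) ^ 2
      = C₄ * (w z) ^ 4 + C₃ * (w z) ^ 3 + C₂ * (w z) ^ 2 + C₁ * w z + C₀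
        + 2 * c / (μ ^ 3 * (w z) ^ 2) := by
  have hw2 : ContDiff ℝ ((⊤ : ℕ∞) : WithTop ℕ∞) w := hw.of_le (by simp)
  obtain ⟨hwd, hw'⟩ := contDiff_infty_iff_deriv.mp hw2
  have hwd' : Differentiable ℝ (deriv w) := hw'.differentiable (by simp)
  set g : ℝ → ℝ := fun z => (w z) ^ 2 * (deriv w z) ^ 2
    - (C₄ * (w z) ^ 6 + C₃ * (w z) ^ 5 + C₂ * (w z) ^ 4 + C₁ * (w z) ^ 3 + C₀ * (w z) ^ 2)
    with hg
  have hder : ∀ z : ℝ, HasDerivAt g 0 z := by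
    intro z
    have h1 : HasDerivAt w (deriv w z) z := (hwd z).hasDerivAt
    have h2 : HasDerivAt (deriv w) (deriv (deriv w) z) z := (hwd' z).hasDerivAt
    have H : HasDerivAt g
        ((2 * w z ^ 1 * deriv w z) * (deriv w z) ^ 2
          + (w z) ^ 2 * (2 * (deriv w z) ^ 1 * deriv (deriv w) z)
          - (C₄ * (6 * w z ^ 5 * deriv w z) + C₃ * (5 * w z ^ 4 * deriv w z)
            + C₂ * (4 * w z ^ 3 * deriv w z) + C₁ * (3 * w z ^ 2 * deriv w z)
            + C₀ * (2 * w z ^ 1 * deriv w z))) z := by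
      exact ((h1.pow 2).mul (h2.pow 2)).sub
        ((((((h1.pow 6).const_mul C₄).add ((h1.pow 5).const_mul C₃)).add
          ((h1.pow 4).const_mul C₂)).add ((h1.pow 3).const_mul C₁)).add
          ((h1.pow 2).const_mul C₀))
    have hE := hode z
    rw [hf (w z)] at hE
    have key : w z ^ 2 * deriv (deriv w) z + w z * (deriv w z) ^ 2
        = 3 * C₄ * w z ^ 5 + (5 / 2) * C₃ * w z ^ 4 + 2 * C₂ * w z ^ 3
          + (3 / 2) * C₁ * w z ^ 2 + C₀ * w z := by
      have hμ5 : μ ^ 5 ≠ 0 := pow_ne_zero 5 hμ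
      field_simp at hE
      apply mul_left_cancel₀ hμ5
      linear_combination (μ ^ 2 / 2 : ℝ) * hE
    have : ((2 * w z ^ 1 * deriv w z) * (deriv w z) ^ 2
          + (w z) ^ 2 * (2 * (deriv w z) ^ 1 * deriv (deriv w) z)
          - (C₄ * (6 * w z ^ 5 * deriv w z) + C₃ * (5 * w z ^ 4 * deriv w z)
            + C₂ * (4 * w z ^ 3 * deriv w z) + C₁ * (3 * w z ^ 2 * deriv w z)
            + C₀ * (2 * w z ^ 1 * deriv w z))) = 0 := by
      linear_combination (2 * deriv w z) * key
    rwa [this] at H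
  have hconst : ∀ z : ℝ, g z = g 0 := by
    intro z
    exact is_const_of_deriv_eq_zero (fun x => (hder x).differentiableAt)
      (fun x => (hder x).deriv) z 0
  refine ⟨μ ^ 3 * (w 0 ^ 2 * deriv w 0 ^ 2
    - (C₄ * w 0 ^ 6 + C₃ * w 0 ^ 5 + C₂ * w 0 ^ 4 + C₁ * w 0 ^ 3 + C₀ * w 0 ^ 2)) / 2,
    fun z => ?_⟩
  have hgz := hconst z
  have hwz := hw0 z
  have hμ3 : μ ^ 3 ≠ 0 := pow_ne_zero 3 hμ
  simp only [hg] at hgz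
  field_simp
  linear_combination hgz
end

section
/- Let μ ≠ 0, λ, k, g₂, g₃ be real constants, and let f(s) = −10 μ² s⁴ + (3/2) g₂ μ² s² + g₃ μ² s + (λ/μ) s − k/μ. If w : ℝ → ℝ is a smooth nowhere-vanishing function satisfying μ³ w² w'' − λ w + μ³ w (w')² + μ f(w) + k = 0 on ℝ, then there exists a constant c ∈ ℝ such that (w'(z))² = 4 w(z)³ − g₂ w(z) − g₃ + 2c/(μ³ w(z)²) for all z ∈ ℝ. In particular, when c = 0, w satisfies the Weierstrass elliptic equation (w')² = 4w³ − g₂ w − g₃. -/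
/-- For the special choice of `f` below, a nowhere-vanishing solution of the
second-order travelling wave ODE satisfies the quadrature
`(w')² = 4w³ − g₂ w − g₃ + 2c/(μ³ w²)`; when `c = 0` this is the Weierstrass elliptic
equation. -/
theorem travelling_wave_weierstrass_quadrature (μ lam k g₂ g₃ : ℝ) (hμ : μ ≠ 0)
    (f : ℝ → ℝ)
    (hf : ∀ s : ℝ, f s = -10 * μ ^ 2 * s ^ 4 + (3 / 2) * g₂ * μ ^ 2 * s ^ 2
      + g₃ * μ ^ 2 * s + (lam / μ) * s - k / μ)
    (w : ℝ → ℝ) (hw : ContDiff ℝ (⊤ : ℕ∞) w) (hw0 : ∀ z : ℝ, w z ≠ 0)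
    (hode : ∀ z : ℝ, μ ^ 3 * (w z) ^ 2 * deriv (deriv w) z - lam * w z
      + μ ^ 3 * w z * (deriv w z) ^ 2 + μ * f (w z) + k = 0) :
    ∃ c : ℝ, ∀ z : ℝ, (deriv w z) ^ 2
      = 4 * (w z) ^ 3 - g₂ * w z - g₃ + 2 * c / (μ ^ 3 * (w z) ^ 2) := by
  have hdw : Differentiable ℝ w := hw.differentiable (by simp)
  have hdw' : Differentiable ℝ (deriv w) :=
    ((contDiff_infty_iff_deriv.mp (hw.of_le (by simp))).2).differentiable (by norm_num)
  set G : ℝ → ℝ := fun z =>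
    μ ^ 3 * (w z) ^ 2 * ((deriv w z) ^ 2 - 4 * (w z) ^ 3 + g₂ * w z + g₃) with hGdef
  have key : ∀ z : ℝ, HasDerivAt G 0 z := by
    intro z
    have h1 : HasDerivAt w (deriv w z) z := (hdw z).hasDerivAt
    have h2 : HasDerivAt (deriv w) (deriv (deriv w) z) z := (hdw' z).hasDerivAt
    have h4 : μ ^ 3 * (w z) ^ 2 * deriv (deriv w) z + μ ^ 3 * (w z) * (deriv w z) ^ 2
        - 10 * μ ^ 3 * (w z) ^ 4 + (3 / 2) * g₂ * μ ^ 3 * (w z) ^ 2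
        + g₃ * μ ^ 3 * (w z) = 0 := by
      have h := hode z
      rw [hf] at h
      field_simp at h
      apply mul_left_cancel₀ (mul_ne_zero (mul_ne_zero two_ne_zero hμ) hμ)
      rw [mul_zero]
      linear_combination μ ^ 2 * h
    have H := ((h1.pow 2).const_mul (μ ^ 3)).mul
      (((h2.pow 2).sub ((h1.pow 3).const_mul 4)).add ((h1.const_mul g₂).add_const g₃))
    refine (H.congr_of_eventuallyEq (Filter.EventuallyEq.of_eq ?_)).congr_deriv (Eq.symm ?_)
    · funext y
      simp only [hGdef]
      simp only [Pi.mul_apply, Pi.add_apply, Pi.sub_apply, Pi.pow_apply]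
      ring
    · push_cast
      simp only [Pi.add_apply, Pi.sub_apply, Pi.pow_apply]
      linear_combination (-2 * deriv w z) * h4
  have hconst : ∀ z : ℝ, G z = G 0 := by
    intro z
    exact is_const_of_deriv_eq_zero (fun x => (key x).differentiableAt)
      (fun x => (key x).deriv) z 0
  refine ⟨G 0 / 2, fun z => ?_⟩
  have h := hconst z
  have hne : μ ^ 3 * (w z) ^ 2 ≠ 0 := mul_ne_zero (pow_ne_zero 3 hμ) (pow_ne_zero 2 (hw0 z))
  have hwz := hw0 z
  field_simp
  linear_combination h
end

section
/- Let μ ≠ 0, λ, k be real constants and let f(s) = 10 μ² s⁴ − 8 μ² s³ + (λ/μ) s − k/μ. Then the function u(t,x) := sech²(μ x − λ t) is a smooth solution of the generalized quasilinear KdV equation u_t + u² u_{xxx} + 4 u u_x u_{xx} + u_x³ + f'(u) u_x = 0 on ℝ². This solution is a soliton with speed λ/μ travelling in the moving coordinate μx − λt. -/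
noncomputable def F0 (z : ℝ) : ℝ := (1 / Real.cosh z) ^ 2
noncomputable def F1 (z : ℝ) : ℝ := -2 * Real.sinh z / Real.cosh z ^ 3
noncomputable def F2 (z : ℝ) : ℝ := -2 / Real.cosh z ^ 2 + 6 * Real.sinh z ^ 2 / Real.cosh z ^ 4
noncomputable def F3 (z : ℝ) : ℝ := 16 * Real.sinh z / Real.cosh z ^ 3 - 24 * Real.sinh z ^ 3 / Real.cosh z ^ 5

lemma hF0 (z : ℝ) : HasDerivAt F0 (F1 z) z := by
  have hc := (Real.cosh_pos z).ne'
  have h := ((Real.hasDerivAt_cosh z).inv hc).pow 2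
  have hF : F0 = Real.cosh⁻¹ ^ 2 := by funext w; simp [F0, one_div]
  rw [hF]; refine h.congr_deriv ?_
  simp only [F1, Pi.inv_apply]; field_simp; ring_nf; simp [hc]

lemma hF1 (z : ℝ) : HasDerivAt F1 (F2 z) z := by
  have hc := (Real.cosh_pos z).ne'
  have h := (((Real.hasDerivAt_sinh z).const_mul (-2)).div ((Real.hasDerivAt_cosh z).pow 3) (pow_ne_zero 3 hc))
  have h' : HasDerivAt F1 _ z := h
  refine h'.congr_deriv ?_
  · simp only [F2, Pi.pow_apply]; norm_num
    have hs : Real.sinh z ^ 2 = Real.cosh z ^ 2 - 1 := by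
      have := Real.cosh_sq_sub_sinh_sq z; linarith
    field_simp
    ring

lemma hF2 (z : ℝ) : HasDerivAt F2 (F3 z) z := by
  have hc := (Real.cosh_pos z).ne'
  have h := ((hasDerivAt_const z (-2:ℝ)).div ((Real.hasDerivAt_cosh z).pow 2) (pow_ne_zero 2 hc)).add
    ((((Real.hasDerivAt_sinh z).pow 2).const_mul 6).div ((Real.hasDerivAt_cosh z).pow 4) (pow_ne_zero 4 hc))
  have h' : HasDerivAt F2 _ z := h
  refine h'.congr_deriv ?_
  · simp only [F3, Pi.pow_apply]; norm_num
    have hs : Real.sinh z ^ 2 = Real.cosh z ^ 2 - 1 := by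
      have := Real.cosh_sq_sub_sinh_sq z; linarith
    field_simp
    ring_nf

lemma key (z : ℝ) : F0 z ^ 2 * F3 z + 4 * F0 z * F1 z * F2 z + F1 z ^ 3
    + (40 * F0 z ^ 3 - 24 * F0 z ^ 2) * F1 z = 0 := by
  have hc := (Real.cosh_pos z).ne'
  have hs : Real.sinh z ^ 2 = Real.cosh z ^ 2 - 1 := by
    have := Real.cosh_sq_sub_sinh_sq z; linarith
  simp only [F0, F1, F2, F3]
  field_simp
  ring_nf
  linear_combination (-80 * Real.sinh z) * hs

lemma compSub {G G' : ℝ → ℝ} (hG : ∀ z, HasDerivAt G (G' z) z) (a b x : ℝ) :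
    HasDerivAt (fun s => G (a * s - b)) (a * G' (a * x - b)) x := by
  have h := (hG (a * x - b)).comp x (((hasDerivAt_id x).const_mul a).sub_const b)
  exact h.congr_deriv (by ring)

lemma compT {G G' : ℝ → ℝ} (hG : ∀ z, HasDerivAt G (G' z) z) (a b x : ℝ) :
    HasDerivAt (fun s => G (b - a * s)) (-(a * G' (b - a * x))) x := by
  have h := (hG (b - a * x)).comp x (((hasDerivAt_id x).const_mul a).const_sub b)
  exact h.congr_deriv (by ring)

/-- For `f(s) = 10μ²s⁴ − 8μ²s³ + (λ/μ)s − k/μ`, the soliton `u(t,x) = sech²(μx − λt)`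
is a smooth solution of the generalized quasilinear KdV equation. -/
theorem sech_sq_soliton_solution (μ lam k : ℝ) (hμ : μ ≠ 0) (f : ℝ → ℝ)
    (hf : ∀ s : ℝ, f s = 10 * μ ^ 2 * s ^ 4 - 8 * μ ^ 2 * s ^ 3 + (lam / μ) * s - k / μ) :
    ContDiff ℝ (⊤ : ℕ∞) (fun p : ℝ × ℝ => (1 / Real.cosh (μ * p.2 - lam * p.1)) ^ 2) ∧
      ∀ p : ℝ × ℝ,
        kdvLHS f (fun q : ℝ × ℝ => (1 / Real.cosh (μ * q.2 - lam * q.1)) ^ 2) p = 0 := by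
  constructor
  · have h1 : ContDiff ℝ (⊤ : ℕ∞) (fun p : ℝ × ℝ => Real.cosh (μ * p.2 - lam * p.1)) :=
      Real.contDiff_cosh.comp ((contDiff_const.mul contDiff_snd).sub
        (contDiff_const.mul contDiff_fst))
    simpa [one_div] using (h1.inv fun p => (Real.cosh_pos _).ne').pow 2
  · intro p
    set U : ℝ × ℝ → ℝ := fun q => (1 / Real.cosh (μ * q.2 - lam * q.1)) ^ 2 with hUdef
    have e1 : pdx U = fun q => μ * F1 (μ * q.2 - lam * q.1) := by
      funext q
      exact (compSub hF0 μ (lam * q.1) q.2).deriv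
    have e2 : pdx (fun q : ℝ × ℝ => μ * F1 (μ * q.2 - lam * q.1))
        = fun q => μ * (μ * F2 (μ * q.2 - lam * q.1)) := by
      funext q
      exact ((compSub hF1 μ (lam * q.1) q.2).const_mul μ).deriv
    have e3 : pdx (fun q : ℝ × ℝ => μ * (μ * F2 (μ * q.2 - lam * q.1)))
        = fun q => μ * (μ * (μ * F3 (μ * q.2 - lam * q.1))) := by
      funext q
      exact (((compSub hF2 μ (lam * q.1) q.2).const_mul μ).const_mul μ).deriv
    have ht : pdt U p = -(lam * F1 (μ * p.2 - lam * p.1)) :=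
      (compT hF0 lam (μ * p.2) p.1).deriv
    have hdf : deriv f (U p) = 40 * μ ^ 2 * (U p) ^ 3 - 24 * μ ^ 2 * (U p) ^ 2 + lam / μ := by
      rw [funext hf]
      have h : HasDerivAt (fun s : ℝ => 10 * μ ^ 2 * s ^ 4 - 8 * μ ^ 2 * s ^ 3
          + (lam / μ) * s - k / μ)
          (40 * μ ^ 2 * (U p) ^ 3 - 24 * μ ^ 2 * (U p) ^ 2 + lam / μ) (U p) := by
        have h4 := (hasDerivAt_pow 4 (U p)).const_mul (10 * μ ^ 2)
        have h3 := (hasDerivAt_pow 3 (U p)).const_mul (8 * μ ^ 2)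
        have h1 := (hasDerivAt_id (U p)).const_mul (lam / μ)
        have := ((h4.sub h3).add h1).sub_const (k / μ)
        refine this.congr_deriv ?_
        norm_num; ring
      exact h.deriv
    have hU : U p = F0 (μ * p.2 - lam * p.1) := rfl
    rw [kdvLHS, e1, e2, e3, ht, hdf, hU]
    simp only
    have hk := key (μ * p.2 - lam * p.1)
    have hμ' : lam / μ * μ = lam := div_mul_cancel₀ lam hμ
    linear_combination μ ^ 3 * hk + F1 (μ * p.2 - lam * p.1) * hμ'
end

section
/- Let μ ≠ 0, λ, k be real constants and let f(s) = −2 μ² s³ − μ² s + (λ/μ) s − k/μ. Then the function u(t,x) := sinh(μ x − λ t) is a smooth solution of the generalized quasilinear KdV equation u_t + u² u_{xxx} + 4 u u_x u_{xx} + u_x³ + f'(u) u_x = 0 on ℝ². -/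
lemma lin_hasDerivAt (a c x : ℝ) : HasDerivAt (fun s : ℝ => a * s + c) a x := by
  simpa using ((hasDerivAt_id x).const_mul a).add_const c

lemma dsinh (a c x : ℝ) : deriv (fun s => Real.sinh (a * s + c)) x = a * Real.cosh (a * x + c) := by
  have := (Real.hasDerivAt_sinh (a * x + c)).comp x (lin_hasDerivAt a c x)
  simpa [mul_comm, Function.comp_def] using this.deriv

lemma dcosh (a c b x : ℝ) :
    deriv (fun s => b * Real.cosh (a * s + c)) x = b * a * Real.sinh (a * x + c) := by
  have := (((Real.hasDerivAt_cosh (a * x + c)).comp x (lin_hasDerivAt a c x)).const_mul b)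
  simpa [mul_comm, mul_assoc, mul_left_comm] using this.deriv

lemma dsinh2 (a c b x : ℝ) :
    deriv (fun s => b * Real.sinh (a * s + c)) x = b * a * Real.cosh (a * x + c) := by
  have := (((Real.hasDerivAt_sinh (a * x + c)).comp x (lin_hasDerivAt a c x)).const_mul b)
  simpa [mul_comm, mul_assoc, mul_left_comm] using this.deriv

/-- For `f(s) = −2μ²s³ − μ²s + (λ/μ)s − k/μ`, the function `u(t,x) = sinh(μx − λt)`
is a smooth solution of the generalized quasilinear KdV equation. -/
theorem sinh_solution (μ lam k : ℝ) (hμ : μ ≠ 0) (f : ℝ → ℝ)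
    (hf : ∀ s : ℝ, f s = -2 * μ ^ 2 * s ^ 3 - μ ^ 2 * s + (lam / μ) * s - k / μ) :
    ContDiff ℝ (⊤ : ℕ∞) (fun p : ℝ × ℝ => Real.sinh (μ * p.2 - lam * p.1)) ∧
      ∀ p : ℝ × ℝ,
        kdvLHS f (fun q : ℝ × ℝ => Real.sinh (μ * q.2 - lam * q.1)) p = 0 := by
  constructor
  · exact Real.contDiff_sinh.comp ((contDiff_const.mul contDiff_snd).sub
      (contDiff_const.mul contDiff_fst))
  · intro p
    set u : ℝ × ℝ → ℝ := fun q => Real.sinh (μ * q.2 - lam * q.1) with hu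
    have hux : pdx u = fun q => μ * Real.cosh (μ * q.2 - lam * q.1) := by
      funext q
      show deriv (fun s => u (q.1, s)) q.2 = _
      have h1 : (fun s => u (q.1, s)) = fun s => Real.sinh (μ * s + (- lam * q.1)) := by
        funext s; simp only [hu]; ring_nf
      rw [h1, dsinh]; ring_nf
    have huxx : pdx (pdx u) = fun q => μ ^ 2 * Real.sinh (μ * q.2 - lam * q.1) := by
      funext q
      show deriv (fun s => pdx u (q.1, s)) q.2 = _
      have h1 : (fun s => pdx u (q.1, s)) = fun s => μ * Real.cosh (μ * s + (- lam * q.1)) := by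
        funext s; rw [hux]; ring_nf
      rw [h1, dcosh]; ring_nf
    have huxxx : pdx (pdx (pdx u)) = fun q => μ ^ 3 * Real.cosh (μ * q.2 - lam * q.1) := by
      funext q
      show deriv (fun s => pdx (pdx u) (q.1, s)) q.2 = _
      have h1 : (fun s => pdx (pdx u) (q.1, s))
          = fun s => μ ^ 2 * Real.sinh (μ * s + (- lam * q.1)) := by
        funext s; rw [huxx]; ring_nf
      rw [h1, dsinh2]; ring_nf
    have hut : pdt u p = - lam * Real.cosh (μ * p.2 - lam * p.1) := by
      show deriv (fun s => u (s, p.2)) p.1 = _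
      have h1 : (fun s => u (s, p.2)) = fun s => Real.sinh ((-lam) * s + μ * p.2) := by
        funext s; simp only [hu]; ring_nf
      rw [h1, dsinh]; ring_nf
    have hfd : deriv f (u p) = -6 * μ ^ 2 * (u p) ^ 2 - μ ^ 2 + lam / μ := by
      have hfe : f = fun s => -2 * μ ^ 2 * s ^ 3 - μ ^ 2 * s + (lam / μ) * s - k / μ :=
        funext hf
      rw [hfe]
      have h : HasDerivAt (fun s : ℝ => -2 * μ ^ 2 * s ^ 3 - μ ^ 2 * s + (lam / μ) * s - k / μ)
          (-2 * μ ^ 2 * (3 * (u p) ^ 2) - μ ^ 2 * 1 + (lam / μ) * 1 - 0) (u p) := by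
        have h1 : HasDerivAt (fun s : ℝ => s ^ 3) (3 * (u p) ^ 2) (u p) := by
          simpa using hasDerivAt_pow 3 (u p)
        have := (((h1.const_mul (-2 * μ ^ 2)).sub
          ((hasDerivAt_id (u p)).const_mul (μ ^ 2))).add
          ((hasDerivAt_id (u p)).const_mul (lam / μ))).sub_const (k / μ)
        simpa [mul_comm] using this
      rw [h.deriv]; ring
    rw [kdvLHS, hut, hfd, huxxx, huxx, hux]
    simp only [hu]
    set c := Real.cosh (μ * p.2 - lam * p.1)
    set s := Real.sinh (μ * p.2 - lam * p.1)
    have hcs : c ^ 2 - s ^ 2 = 1 := Real.cosh_sq_sub_sinh_sq _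
    field_simp
    linear_combination (μ ^ 3 * c) * hcs
end

section
/- Let μ ≠ 0, λ, k be real constants and let f(s) = 2 μ² s³ − μ² s + (λ/μ) s − k/μ. Then the function u(t,x) := sin(μ x − λ t) is a smooth solution of the generalized quasilinear KdV equation u_t + u² u_{xxx} + 4 u u_x u_{xx} + u_x³ + f'(u) u_x = 0 on ℝ²; this is a periodic travelling wave solution. -/
lemma hd_sin (μ lam t x : ℝ) :
    HasDerivAt (fun s => Real.sin (μ * s - lam * t)) (μ * Real.cos (μ * x - lam * t)) x := by
  have h : HasDerivAt (fun s : ℝ => μ * s - lam * t) μ x := by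
    simpa using ((hasDerivAt_id x).const_mul μ).sub_const (lam * t)
  simpa [mul_comm] using h.sin

lemma hd_cos (μ lam t x : ℝ) :
    HasDerivAt (fun s => Real.cos (μ * s - lam * t)) (-(μ * Real.sin (μ * x - lam * t))) x := by
  have h : HasDerivAt (fun s : ℝ => μ * s - lam * t) μ x := by
    simpa using ((hasDerivAt_id x).const_mul μ).sub_const (lam * t)
  simpa [mul_comm] using h.cos

lemma pdx1 (μ lam : ℝ) :
    pdx (fun q : ℝ × ℝ => Real.sin (μ * q.2 - lam * q.1))
      = fun p : ℝ × ℝ => μ * Real.cos (μ * p.2 - lam * p.1) := by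
  funext p
  exact (hd_sin μ lam p.1 p.2).deriv

lemma pdx2 (μ lam : ℝ) :
    pdx (pdx (fun q : ℝ × ℝ => Real.sin (μ * q.2 - lam * q.1)))
      = fun p : ℝ × ℝ => -(μ ^ 2 * Real.sin (μ * p.2 - lam * p.1)) := by
  rw [pdx1]
  funext p
  have := ((hd_cos μ lam p.1 p.2).const_mul μ).deriv
  unfold pdx
  rw [this]; ring

lemma pdx3 (μ lam : ℝ) :
    pdx (pdx (pdx (fun q : ℝ × ℝ => Real.sin (μ * q.2 - lam * q.1))))
      = fun p : ℝ × ℝ => -(μ ^ 3 * Real.cos (μ * p.2 - lam * p.1)) := by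
  rw [pdx2]
  funext p
  have := ((hd_sin μ lam p.1 p.2).const_mul (μ ^ 2)).neg.deriv
  unfold pdx
  exact this.trans (by ring)

/-- For `f(s) = 2μ²s³ − μ²s + (λ/μ)s − k/μ`, the periodic travelling wave
`u(t,x) = sin(μx − λt)` is a smooth solution of the generalized quasilinear KdV
equation. -/
theorem sin_periodic_solution (μ lam k : ℝ) (hμ : μ ≠ 0) (f : ℝ → ℝ)
    (hf : ∀ s : ℝ, f s = 2 * μ ^ 2 * s ^ 3 - μ ^ 2 * s + (lam / μ) * s - k / μ) :
    ContDiff ℝ (⊤ : ℕ∞) (fun p : ℝ × ℝ => Real.sin (μ * p.2 - lam * p.1)) ∧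
      ∀ p : ℝ × ℝ,
        kdvLHS f (fun q : ℝ × ℝ => Real.sin (μ * q.2 - lam * q.1)) p = 0 := by
  have hfe : f = fun s => 2 * μ ^ 2 * s ^ 3 - μ ^ 2 * s + (lam / μ) * s - k / μ :=
    funext hf
  subst hfe
  constructor
  · exact Real.contDiff_sin.comp
      ((contDiff_const.mul contDiff_snd).sub (contDiff_const.mul contDiff_fst))
  · intro p
    have hdf : ∀ y : ℝ,
        deriv (fun s => 2 * μ ^ 2 * s ^ 3 - μ ^ 2 * s + (lam / μ) * s - k / μ) y
          = 6 * μ ^ 2 * y ^ 2 - μ ^ 2 + lam / μ := by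
      intro y
      have h : HasDerivAt (fun s => 2 * μ ^ 2 * s ^ 3 - μ ^ 2 * s + (lam / μ) * s - k / μ)
          (6 * μ ^ 2 * y ^ 2 - μ ^ 2 + lam / μ) y := by
        have h1 := (hasDerivAt_pow 3 y).const_mul (2 * μ ^ 2)
        have h2 := (hasDerivAt_id y).const_mul (μ ^ 2)
        have h3 := (hasDerivAt_id y).const_mul (lam / μ)
        have := ((h1.sub h2).add h3).sub_const (k / μ)
        exact this.congr_deriv (by ring)
      exact h.deriv
    have hpt : pdt (fun q : ℝ × ℝ => Real.sin (μ * q.2 - lam * q.1)) p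
        = -(lam * Real.cos (μ * p.2 - lam * p.1)) := by
      unfold pdt
      have h : HasDerivAt (fun s : ℝ => μ * p.2 - lam * s) (-lam) p.1 := by
        simpa using (((hasDerivAt_id p.1).const_mul lam).const_sub (μ * p.2))
      have := h.sin
      rw [this.deriv]; ring
    unfold kdvLHS
    rw [pdx3, pdx2, pdx1, hpt, hdf]
    set s := Real.sin (μ * p.2 - lam * p.1)
    set c := Real.cos (μ * p.2 - lam * p.1)
    have hsc : s ^ 2 + c ^ 2 = 1 := Real.sin_sq_add_cos_sq _
    field_simp
    rw [show Real.sin (μ * p.2 - lam * p.1) = s from rfl]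
    linear_combination (μ ^ 3 * c) * hsc
end
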